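/- Let (P₁, V₁) be a locally convex cone and (P₂, V₂) a separated full locally convex cone, complete with respect to the symmetric topology. If f : P₁ → P₂ satisfies 2f((x+y)/2) ∈ v(f(x)+f(y))v for some bounded v ∈ V₂ and all x, y ∈ P₁, and f(0) is bounded, then there exists a unique additive mapping A : P₁ → P₂ and a positive real ρ such that A(x) ∈ (ρv)(f(x))(ρv) for all x ∈ P₁. -/
import Mathlib


open scoped NNReal

section Defs
variable {P : Type*} [AddCommMonoid P] [Preorder P]

/-- The closure of a point: intersection of all its upper neighborhoods. -/
def ptCl (V : Set P) (a : P) : Set P := {b | ∀ v ∈ V, b ≤ a + v}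

/-- A locally convex cone is separated if equal closures imply equality. -/
def IsSeparated (V : Set P) : Prop := ∀ a b : P, ptCl V a = ptCl V b → a = b

/-- Abstract 0-neighborhood system. -/
def IsNbhdSystem [SMul ℝ≥0 P] (V : Set P) : Prop :=
  (∀ v ∈ V, 0 < v) ∧
  (∀ u ∈ V, ∀ v ∈ V, ∃ w ∈ V, w ≤ u ∧ w ≤ v) ∧
  (∀ u ∈ V, ∀ v ∈ V, u + v ∈ V) ∧
  (∀ v ∈ V, ∀ c : ℝ≥0, 0 < c → c • v ∈ V)

/-- Compatibility of the preorder with addition and nonnegative scalar multiplication. -/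
def IsOrderedCone (P : Type*) [AddCommMonoid P] [Preorder P] [SMul ℝ≥0 P] : Prop :=
  (∀ a b c : P, a ≤ b → a + c ≤ b + c) ∧
  (∀ (c : ℝ≥0) (a b : P), a ≤ b → c • a ≤ c • b)

/-- All elements are bounded below (full locally convex cone condition). -/
def IsLowerBddCone [SMul ℝ≥0 P] (V : Set P) : Prop :=
  ∀ a : P, ∀ v ∈ V, ∃ ρ : ℝ≥0, 0 < ρ ∧ (0 : P) ≤ a + ρ • v

/-- An element is bounded: upper and lower bounded. -/
def BoundedElem [SMul ℝ≥0 P] (V : Set P) (a : P) : Prop :=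
  (∀ v ∈ V, ∃ c : ℝ≥0, 0 < c ∧ a ≤ c • v) ∧
  (∀ v ∈ V, ∃ ρ : ℝ≥0, 0 < ρ ∧ (0 : P) ≤ a + ρ • v)

/-- Completeness under the symmetric topology: every symmetric Cauchy net converges. -/
def SymComplete (V : Set P) : Prop :=
  ∀ (ι : Type) [Preorder ι] [Nonempty ι], IsDirected ι (· ≤ ·) →
    ∀ a : ι → P, (∀ v ∈ V, ∃ i0, ∀ i j, i0 ≤ i → i0 ≤ j → a i ≤ a j + v) →
      ∃ l : P, ∀ v ∈ V, ∃ i0, ∀ i, i0 ≤ i → a i ≤ l + v ∧ l ≤ a i + v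

end Defs

section Helpers
variable {P : Type*} [AddCommMonoid P] [Module ℝ≥0 P] [Preorder P]

lemma hlp_add_le (hoc : IsOrderedCone P) {a b c d : P} (h1 : a ≤ b) (h2 : c ≤ d) :
    a + c ≤ b + d := by
  calc a + c ≤ b + c := hoc.1 _ _ _ h1
    _ = c + b := add_comm _ _
    _ ≤ d + b := hoc.1 _ _ _ h2
    _ = b + d := add_comm _ _

lemma hlp_le_add (hoc : IsOrderedCone P) {p q : P} (h : 0 ≤ q) : p ≤ p + q := by
  calc p = 0 + p := (zero_add p).symm
    _ ≤ q + p := hoc.1 _ _ _ h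
    _ = p + q := add_comm _ _

lemma hlp_smul_nonneg (hoc : IsOrderedCone P) (t : ℝ≥0) {p : P} (hp : 0 ≤ p) : 0 ≤ t • p := by
  have := hoc.2 t 0 p hp
  simpa using this

lemma hlp_smul_le_smul (hoc : IsOrderedCone P) {s t : ℝ≥0} (h : s ≤ t) {p : P} (hp : 0 ≤ p) :
    s • p ≤ t • p := by
  have ht : t • p = s • p + (t - s) • p := by rw [← add_smul, add_tsub_cancel_of_le h]
  rw [ht]
  exact hlp_le_add hoc (hlp_smul_nonneg hoc _ hp)

lemma hlp_smul_le_of_le_one (hoc : IsOrderedCone P) {t : ℝ≥0} (ht : t ≤ 1) {p : P} (hp : 0 ≤ p) :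
    t • p ≤ p := by
  calc t • p ≤ 1 • p := hlp_smul_le_smul hoc ht hp
    _ = p := one_smul _ _

end Helpers

/-- Hyers–Ulam stability of the Jensen equation in locally convex cones. -/
theorem jensen_stability {P₁ P₂ : Type*}
    [AddCommMonoid P₁] [Module ℝ≥0 P₁] [Preorder P₁]
    [AddCommMonoid P₂] [Module ℝ≥0 P₂] [Preorder P₂]
    (V₁ : Set P₁) (V₂ : Set P₂)
    (hoc₁ : IsOrderedCone P₁) (hV₁ : IsNbhdSystem V₁) (hlb₁ : IsLowerBddCone V₁)
    (hoc₂ : IsOrderedCone P₂) (hV₂ : IsNbhdSystem V₂) (hlb₂ : IsLowerBddCone V₂)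
    (hsep : IsSeparated V₂) (hcomp : SymComplete V₂)
    (f : P₁ → P₂) (v : P₂) (hv : v ∈ V₂) (hvbdd : BoundedElem V₂ v)
    (hf0 : BoundedElem V₂ (f 0))
    (happrox : ∀ x y : P₁,
      (2 : ℝ≥0) • f ((2 : ℝ≥0)⁻¹ • (x + y)) ≤ f x + f y + v ∧
      f x + f y ≤ (2 : ℝ≥0) • f ((2 : ℝ≥0)⁻¹ • (x + y)) + v) :
    ∃ A : P₁ → P₂,
      (∀ x y : P₁, A (x + y) = A x + A y) ∧
      (∃ ρ : ℝ≥0, 0 < ρ ∧ ∀ x : P₁, A x ≤ f x + ρ • v ∧ f x ≤ A x + ρ • v) ∧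
      (∀ A' : P₁ → P₂, (∀ x y : P₁, A' (x + y) = A' x + A' y) →
        (∃ ρ' : ℝ≥0, 0 < ρ' ∧ ∀ x : P₁, A' x ≤ f x + ρ' • v ∧ f x ≤ A' x + ρ' • v) →
        A' = A) := by
  classical
  have hsmul₂ := hoc₂.2
  have h0v : (0:P₂) ≤ v := (hV₂.1 v hv).le
  set δ : ℕ → ℝ≥0 := fun n => ((2:ℝ≥0)^n)⁻¹ with hδdef
  have hδ0 : δ 0 = 1 := by simp [hδdef]
  have hδmul : ∀ n : ℕ, δ (n+1) * 2 = δ n := by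
    intro n
    simp only [hδdef]
    rw [pow_succ, mul_inv, mul_assoc, inv_mul_cancel₀ two_ne_zero, mul_one]
  have hδhalf : ∀ n : ℕ, δ (n+1) + δ (n+1) = δ n := by
    intro n
    rw [← hδmul n]; ring
  have hδpow : ∀ n : ℕ, δ n * (2:ℝ≥0)^n = 1 :=
    fun n => inv_mul_cancel₀ (pow_ne_zero n two_ne_zero)
  set a : ℕ → P₁ → P₂ := fun n x => δ n • f ((2:ℝ≥0)^n • x) with hadef
  have ha0 : ∀ x, a 0 x = f x := by
    intro x
    simp only [hadef, hδ0, pow_zero, one_smul]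
  -- smallness of multiples of v
  have small : ∀ w ∈ V₂, ∀ c : ℝ≥0, ∃ n0 : ℕ, ∀ n, n0 ≤ n → (δ n * c) • v ≤ w := by
    intro w hw c
    obtain ⟨cw, hcwpos, hcw⟩ := hvbdd.1 w hw
    obtain ⟨n0, hn0⟩ := pow_unbounded_of_one_lt (c * cw) (one_lt_two : (1:ℝ≥0) < 2)
    refine ⟨n0, fun n hn => ?_⟩
    have h0w : (0:P₂) ≤ w := (hV₂.1 w hw).le
    have hcoeff : δ n * c * cw ≤ 1 := by
      have h1 : c * cw ≤ (2:ℝ≥0)^n :=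
        le_trans hn0.le (pow_le_pow_right₀ one_le_two hn)
      calc δ n * c * cw = δ n * (c * cw) := by ring
        _ ≤ δ n * (2:ℝ≥0)^n := mul_le_mul_right h1 _
        _ = 1 := hδpow n
    calc (δ n * c) • v ≤ (δ n * c) • (cw • w) := hsmul₂ _ _ _ hcw
      _ = (δ n * c * cw) • w := by rw [smul_smul, mul_assoc]
      _ ≤ w := hlp_smul_le_of_le_one hoc₂ hcoeff h0w
  -- key Jensen step
  have key : ∀ (n : ℕ) (x y : P₁),
      a n (x+y) ≤ a (n+1) x + a (n+1) y + δ (n+1) • v ∧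
      a (n+1) x + a (n+1) y ≤ a n (x+y) + δ (n+1) • v := by
    intro n x y
    obtain ⟨h1, h2⟩ := happrox ((2:ℝ≥0)^(n+1) • x) ((2:ℝ≥0)^(n+1) • y)
    have hmid : (2:ℝ≥0)⁻¹ • ((2:ℝ≥0)^(n+1) • x + (2:ℝ≥0)^(n+1) • y)
        = (2:ℝ≥0)^n • (x + y) := by
      rw [smul_add, smul_smul, smul_smul, ← smul_add]
      congr 1
      rw [pow_succ, mul_comm ((2:ℝ≥0)^n) 2, ← mul_assoc, inv_mul_cancel₀ two_ne_zero, one_mul]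
    rw [hmid] at h1 h2
    have eL : δ (n+1) • ((2:ℝ≥0) • f ((2:ℝ≥0)^n • (x+y))) = a n (x+y) := by
      rw [smul_smul, hδmul]
    have eM : δ (n+1) • (f ((2:ℝ≥0)^(n+1) • x) + f ((2:ℝ≥0)^(n+1) • y))
        = a (n+1) x + a (n+1) y := by
      rw [smul_add (δ (n+1)) (f ((2:ℝ≥0)^(n+1) • x)) (f ((2:ℝ≥0)^(n+1) • y))]
    have eR : δ (n+1) • (f ((2:ℝ≥0)^(n+1) • x) + f ((2:ℝ≥0)^(n+1) • y) + v)
        = a (n+1) x + a (n+1) y + δ (n+1) • v := by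
      rw [smul_add (δ (n+1)) (f ((2:ℝ≥0)^(n+1) • x) + f ((2:ℝ≥0)^(n+1) • y)) v, eM]
    have eR2 : δ (n+1) • ((2:ℝ≥0) • f ((2:ℝ≥0)^n • (x+y)) + v)
        = a n (x+y) + δ (n+1) • v := by
      rw [smul_add (δ (n+1)) ((2:ℝ≥0) • f ((2:ℝ≥0)^n • (x+y))) v, eL]
    constructor
    · have hs1 := hsmul₂ (δ (n+1)) _ _ h1
      rw [eL, eR] at hs1
      exact hs1
    · have hs2 := hsmul₂ (δ (n+1)) _ _ h2
      rw [eM, eR2] at hs2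
      exact hs2
  obtain ⟨c₀, hc₀, hfc⟩ := hf0.1 v hv
  obtain ⟨ρ₀, hρ₀, hfρ⟩ := hf0.2 v hv
  set K : ℝ≥0 := 1 + c₀ + ρ₀ with hK
  have hKpos : 0 < K := by positivity
  -- single step estimate
  have step : ∀ (n : ℕ) (x : P₁),
      a n x ≤ a (n+1) x + (δ (n+1) * K) • v ∧
      a (n+1) x ≤ a n x + (δ (n+1) * K) • v := by
    intro n x
    obtain ⟨h1, h2⟩ := key n x 0
    rw [add_zero] at h1 h2
    have ha0' : a (n+1) (0:P₁) = δ (n+1) • f 0 := by simp [hadef]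
    rw [ha0'] at h1 h2
    constructor
    · have hb : δ (n+1) • f 0 ≤ (δ (n+1) * c₀) • v := by
        rw [← smul_smul]; exact hsmul₂ _ _ _ hfc
      calc a n x ≤ a (n+1) x + δ (n+1) • f 0 + δ (n+1) • v := h1
        _ ≤ a (n+1) x + (δ (n+1) * c₀) • v + δ (n+1) • v :=
            hlp_add_le hoc₂ (hlp_add_le hoc₂ le_rfl hb) le_rfl
        _ = a (n+1) x + (δ (n+1) * c₀ + δ (n+1)) • v := by
            rw [add_assoc, ← add_smul]
        _ ≤ a (n+1) x + (δ (n+1) * K) • v := by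
            refine hlp_add_le hoc₂ le_rfl (hlp_smul_le_smul hoc₂ ?_ h0v)
            have hc1 : c₀ + 1 ≤ K := by
              rw [hK, add_comm c₀ 1]
              exact le_self_add
            calc δ (n+1) * c₀ + δ (n+1) = δ (n+1) * (c₀ + 1) := by ring
              _ ≤ δ (n+1) * K := mul_le_mul_right hc1 _
    · have h0' : (0:P₂) ≤ δ (n+1) • (f 0 + ρ₀ • v) := hlp_smul_nonneg hoc₂ _ hfρ
      calc a (n+1) x ≤ a (n+1) x + δ (n+1) • (f 0 + ρ₀ • v) := hlp_le_add hoc₂ h0'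
        _ = (a (n+1) x + δ (n+1) • f 0) + (δ (n+1) * ρ₀) • v := by
            rw [smul_add, smul_smul, add_assoc]
        _ ≤ (a n x + δ (n+1) • v) + (δ (n+1) * ρ₀) • v := hlp_add_le hoc₂ h2 le_rfl
        _ = a n x + (δ (n+1) + δ (n+1) * ρ₀) • v := by rw [add_assoc, ← add_smul]
        _ ≤ a n x + (δ (n+1) * K) • v := by
            refine hlp_add_le hoc₂ le_rfl (hlp_smul_le_smul hoc₂ ?_ h0v)
            have hc2 : 1 + ρ₀ ≤ K := by
              rw [hK, add_assoc, add_comm c₀ ρ₀, ← add_assoc]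
              exact le_self_add
            calc δ (n+1) + δ (n+1) * ρ₀ = δ (n+1) * (1 + ρ₀) := by ring
              _ ≤ δ (n+1) * K := mul_le_mul_right hc2 _
  -- telescoping estimate
  have tele : ∀ (m n : ℕ) (x : P₁),
      a n x ≤ a (n+m) x + (δ n * K) • v ∧ a (n+m) x ≤ a n x + (δ n * K) • v := by
    intro m
    induction m with
    | zero =>
      intro n x
      have h0 : (0:P₂) ≤ (δ n * K) • v := hlp_smul_nonneg hoc₂ _ h0v
      exact ⟨hlp_le_add hoc₂ h0, hlp_le_add hoc₂ h0⟩
    | succ m ih =>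
      intro n x
      obtain ⟨s1, s2⟩ := step n x
      obtain ⟨t1, t2⟩ := ih (n+1) x
      have hco : δ (n+1) * K + δ (n+1) * K = δ n * K := by rw [← add_mul, hδhalf]
      have hidx : n + 1 + m = n + (m + 1) := by omega
      rw [hidx] at t1 t2
      constructor
      · calc a n x ≤ a (n+1) x + (δ (n+1) * K) • v := s1
          _ ≤ (a (n+(m+1)) x + (δ (n+1) * K) • v) + (δ (n+1) * K) • v :=
              hlp_add_le hoc₂ t1 le_rfl
          _ = a (n+(m+1)) x + (δ n * K) • v := by rw [add_assoc, ← add_smul, hco]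
      · calc a (n+(m+1)) x ≤ a (n+1) x + (δ (n+1) * K) • v := t2
          _ ≤ (a n x + (δ (n+1) * K) • v) + (δ (n+1) * K) • v := hlp_add_le hoc₂ s2 le_rfl
          _ = a n x + (δ n * K) • v := by rw [add_assoc, ← add_smul, hco]
  -- Cauchy
  have cauchy : ∀ (x : P₁) (w : P₂), w ∈ V₂ → ∃ n0 : ℕ, ∀ n m, n0 ≤ n → n0 ≤ m →
      a n x ≤ a m x + w := by
    intro x w hw
    obtain ⟨n0, hn0⟩ := small w hw K
    refine ⟨n0, fun n m hn hm => ?_⟩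
    rcases le_total n m with h | h
    · obtain ⟨k, rfl⟩ := Nat.exists_eq_add_of_le h
      calc a n x ≤ a (n+k) x + (δ n * K) • v := (tele k n x).1
        _ ≤ a (n+k) x + w := hlp_add_le hoc₂ le_rfl (hn0 n hn)
    · obtain ⟨k, rfl⟩ := Nat.exists_eq_add_of_le h
      calc a (m+k) x ≤ a m x + (δ m * K) • v := (tele k m x).2
        _ ≤ a m x + w := hlp_add_le hoc₂ le_rfl (hn0 m hm)
  have hlim : ∀ x : P₁, ∃ l : P₂, ∀ w ∈ V₂, ∃ n0 : ℕ, ∀ n, n0 ≤ n →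
      a n x ≤ l + w ∧ l ≤ a n x + w := by
    intro x
    exact hcomp ℕ ⟨fun i j => ⟨max i j, le_max_left _ _, le_max_right _ _⟩⟩
      (fun n => a n x) (fun w hw => cauchy x w hw)
  choose A hA using hlim
  -- halving and separation tool
  have half : ∀ w ∈ V₂, ((2:ℝ≥0)⁻¹ • w) ∈ V₂ ∧ (2:ℝ≥0)⁻¹ • w + (2:ℝ≥0)⁻¹ • w = w := by
    intro w hw
    have h12 : (2:ℝ≥0)⁻¹ + (2:ℝ≥0)⁻¹ = 1 := by
      rw [← two_mul, mul_inv_cancel₀ two_ne_zero]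
    refine ⟨hV₂.2.2.2 w hw _ (by norm_num), ?_⟩
    rw [← add_smul, h12, one_smul]
  have eqcl : ∀ p q : P₂, (∀ w ∈ V₂, p ≤ q + w ∧ q ≤ p + w) → p = q := by
    intro p q h
    apply hsep
    ext b
    simp only [ptCl, Set.mem_setOf_eq]
    constructor
    · intro hb w hw
      obtain ⟨hu, huw⟩ := half w hw
      calc b ≤ p + (2:ℝ≥0)⁻¹ • w := hb _ hu
        _ ≤ (q + (2:ℝ≥0)⁻¹ • w) + (2:ℝ≥0)⁻¹ • w := hlp_add_le hoc₂ (h _ hu).1 le_rfl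
        _ = q + w := by rw [add_assoc, huw]
    · intro hb w hw
      obtain ⟨hu, huw⟩ := half w hw
      calc b ≤ q + (2:ℝ≥0)⁻¹ • w := hb _ hu
        _ ≤ (p + (2:ℝ≥0)⁻¹ • w) + (2:ℝ≥0)⁻¹ • w := hlp_add_le hoc₂ (h _ hu).2 le_rfl
        _ = p + w := by rw [add_assoc, huw]
  -- additivity
  have hAadd : ∀ x y : P₁, A (x + y) = A x + A y := by
    intro x y
    apply eqcl
    intro w hw
    obtain ⟨hu2, hw2⟩ := half w hw
    set u2 := (2:ℝ≥0)⁻¹ • w with hu2def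
    obtain ⟨hq, hq2⟩ := half u2 hu2
    set q := (2:ℝ≥0)⁻¹ • u2 with hqdef
    obtain ⟨n1, hn1⟩ := hA (x+y) q hq
    obtain ⟨n2, hn2⟩ := hA x q hq
    obtain ⟨n3, hn3⟩ := hA y q hq
    obtain ⟨n4, hn4⟩ := small q hq 1
    set n := max (max n1 n2) (max n3 n4) with hndef
    have hδq : δ (n+1) • v ≤ q := by
      have := hn4 (n+1) (by omega)
      rwa [mul_one] at this
    have hsum : (((A x + q) + (A y + q)) + q) + q = A x + A y + w := by
      rw [← hw2, ← hq2]; abel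
    constructor
    · calc A (x+y) ≤ a n (x+y) + q := (hn1 n (by omega)).2
        _ ≤ (a (n+1) x + a (n+1) y + δ (n+1) • v) + q :=
            hlp_add_le hoc₂ (key n x y).1 le_rfl
        _ ≤ (((A x + q) + (A y + q)) + q) + q :=
            hlp_add_le hoc₂ (hlp_add_le hoc₂
              (hlp_add_le hoc₂ (hn2 (n+1) (by omega)).1 (hn3 (n+1) (by omega)).1) hδq) le_rfl
        _ = A x + A y + w := hsum
    · have hsum2 : (((A (x+y) + q) + δ (n+1) • v) + (q + q)) = A (x+y) + (δ (n+1) • v + (q + q + q)) := by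
        abel
      calc A x + A y ≤ (a (n+1) x + q) + (a (n+1) y + q) :=
            hlp_add_le hoc₂ (hn2 (n+1) (by omega)).2 (hn3 (n+1) (by omega)).2
        _ = (a (n+1) x + a (n+1) y) + (q + q) := by abel
        _ ≤ (a n (x+y) + δ (n+1) • v) + (q + q) := hlp_add_le hoc₂ (key n x y).2 le_rfl
        _ ≤ ((A (x+y) + q) + δ (n+1) • v) + (q + q) :=
            hlp_add_le hoc₂ (hlp_add_le hoc₂ (hn1 n (by omega)).1 le_rfl) le_rfl
        _ ≤ ((A (x+y) + q) + q) + (q + q) :=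
            hlp_add_le hoc₂ (hlp_add_le hoc₂ le_rfl hδq) le_rfl
        _ = A (x+y) + w := by rw [← hw2, ← hq2]; abel
  -- closeness
  have hclose : ∀ x : P₁, A x ≤ f x + (K+1) • v ∧ f x ≤ A x + (K+1) • v := by
    intro x
    obtain ⟨n0, hn0⟩ := hA x v hv
    obtain ⟨t1, t2⟩ := tele n0 0 x
    rw [Nat.zero_add, ha0 x, hδ0, one_mul] at t1 t2
    have h1 := (hn0 n0 le_rfl).1
    have h2 := (hn0 n0 le_rfl).2
    constructor
    · calc A x ≤ a n0 x + v := h2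
        _ ≤ (f x + K • v) + v := hlp_add_le hoc₂ t2 le_rfl
        _ = f x + (K+1) • v := by rw [add_smul K 1 v, one_smul, add_assoc]
    · calc f x ≤ a n0 x + K • v := t1
        _ ≤ (A x + v) + K • v := hlp_add_le hoc₂ h1 le_rfl
        _ = A x + (K+1) • v := by rw [add_smul K 1 v, one_smul]; abel
  refine ⟨A, hAadd, ⟨K+1, by positivity, hclose⟩, ?_⟩
  intro A' hadd' hex
  obtain ⟨ρ', hρ'pos, hcl'⟩ := hex
  have hpow : ∀ (n : ℕ) (x : P₁), A' ((2:ℝ≥0)^n • x) = (2:ℝ≥0)^n • A' x := by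
    intro n
    induction n with
    | zero => intro x; simp
    | succ n ih =>
      intro x
      have e1 : (2:ℝ≥0)^(n+1) • x = (2:ℝ≥0)^n • ((2:ℝ≥0) • x) := by
        rw [smul_smul, pow_succ]
      rw [e1, ih, two_smul, hadd', ← two_smul ℝ≥0, smul_smul, ← pow_succ]
  have hA'close : ∀ (n : ℕ) (x : P₁),
      A' x ≤ a n x + (δ n * ρ') • v ∧ a n x ≤ A' x + (δ n * ρ') • v := by
    intro n x
    obtain ⟨hc1, hc2⟩ := hcl' ((2:ℝ≥0)^n • x)
    have s1 := hsmul₂ (δ n) _ _ hc1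
    have s2 := hsmul₂ (δ n) _ _ hc2
    rw [smul_add, hpow n x, smul_smul, smul_smul, hδpow, one_smul] at s1
    rw [smul_add, hpow n x, smul_smul, smul_smul, hδpow, one_smul] at s2
    exact ⟨s1, s2⟩
  funext x
  apply eqcl
  intro w hw
  obtain ⟨hu2, hw2⟩ := half w hw
  set u2 := (2:ℝ≥0)⁻¹ • w with hu2def
  obtain ⟨n1, hn1⟩ := hA x u2 hu2
  obtain ⟨n2, hn2⟩ := small u2 hu2 ρ'
  set n := max n1 n2 with hn
  have e1 := (hA'close n x).1
  have e2 := (hA'close n x).2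
  have e3 : a n x ≤ A x + u2 := (hn1 n (le_max_left _ _)).1
  have e4 : A x ≤ a n x + u2 := (hn1 n (le_max_left _ _)).2
  have e5 : (δ n * ρ') • v ≤ u2 := hn2 n (le_max_right _ _)
  constructor
  · calc A' x ≤ a n x + (δ n * ρ') • v := e1
      _ ≤ (A x + u2) + u2 := hlp_add_le hoc₂ e3 e5
      _ = A x + w := by rw [add_assoc, hw2]
  · calc A x ≤ a n x + u2 := e4
      _ ≤ (A' x + (δ n * ρ') • v) + u2 := hlp_add_le hoc₂ e2 le_rfl
      _ ≤ (A' x + u2) + u2 := hlp_add_le hoc₂ (hlp_add_le hoc₂ le_rfl e5) le_rfl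
      _ = A' x + w := by rw [add_assoc, hw2]
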